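/- Suppose every agent's valuation v_i is multilinear in PoS. Then for every efficient allocation choice π*, every family of pivot functions (h_i), every type profile θ, every agent i, and every report θ̂_i, agent i's expected utility equals the true expected social welfare of the chosen allocation minus the pivot term: EU_i(θ_i, θ̂_i, θ_{-i}) = SW(θ, π*(θ̂_i, θ_{-i})) - h_i(θ_{-i}). -/

import Mathlib

/-- A function `f : (N → ℝ) → ℝ` is multilinear on `[0,1]^N`. -/
def MultilinearOn {N : Type*} [Fintype N] [DecidableEq N] (f : (N → ℝ) → ℝ) : Prop :=
  ∀ p : N → ℝ, (∀ j, 0 ≤ p j ∧ p j ≤ 1) → ∀ j,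
    f p = p j * f (Function.update p j 1) + (1 - p j) * f (Function.update p j 0)

/-- A valuation `v : T → (N → ℝ) → ℝ` is multilinear in PoS. -/
def MultilinearInPoS {N T : Type*} [Fintype N] [DecidableEq N]
    (v : T → (N → ℝ) → ℝ) : Prop :=
  ∀ τ : T, MultilinearOn (v τ)

/-- A type of an agent: a valuation together with a probability-of-success function
with values in `[0,1]`. -/
structure AgentType (N T : Type*) where
  v : T → (N → ℝ) → ℝ
  p : T → ℝ
  hp : ∀ τ, 0 ≤ p τ ∧ p τ ≤ 1

/-- The PoS profile `p^τ` of a type profile `θ` at allocation `τ`. -/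
def PoSProfile {N T : Type*} (θ : N → AgentType N T) (τ : T) : N → ℝ :=
  fun j => (θ j).p τ

/-- The expected social welfare of allocation `τ` under type profile `θ`. -/
def SW {N T : Type*} [Fintype N] (θ : N → AgentType N T) (τ : T) : ℝ :=
  ∑ i, (θ i).v τ (PoSProfile θ τ)

/-- An efficient allocation choice function. -/
def Efficient {N T : Type*} [Fintype N] (π : (N → AgentType N T) → T) : Prop :=
  ∀ θ τ, SW θ τ ≤ SW θ (π θ)

/-- A family of pivot functions `h_i` depends only on the types of agents other than `i`. -/
def PivotIndep {N T : Type*} (h : N → (N → AgentType N T) → ℝ) : Prop :=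
  ∀ i θ θ', (∀ j, j ≠ i → θ j = θ' j) → h i θ = h i θ'

/-- Agent `i`'s expected utility in the PEV mechanism when her true type is `θ i`,
she reports `r`, and all other agents have true types `θ` and report truthfully. -/
noncomputable def EU {N T : Type*} [Fintype N] [DecidableEq N]
    (π : (N → AgentType N T) → T) (h : N → (N → AgentType N T) → ℝ)
    (θ : N → AgentType N T) (i : N) (r : AgentType N T) : ℝ :=
  let τ := π (Function.update θ i r)
  let q := PoSProfile θ τ
  (θ i).p τ *
      ((θ i).v τ (Function.update q i 1) +
        ∑ j ∈ Finset.univ.erase i, (θ j).v τ (Function.update q i 1)) +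
    (1 - (θ i).p τ) *
      ((θ i).v τ (Function.update q i 0) +
        ∑ j ∈ Finset.univ.erase i, (θ j).v τ (Function.update q i 0)) -
    h i θ

theorem MultilinearOn.sum {N ι : Type*} [Fintype N] [DecidableEq N] (s : Finset ι)
    {f : ι → (N → ℝ) → ℝ} (hf : ∀ k ∈ s, MultilinearOn (f k)) :
    MultilinearOn (fun p => ∑ k ∈ s, f k p) := by
  intro p hp j
  simp only [Finset.mul_sum, ← Finset.sum_add_distrib]
  exact Finset.sum_congr rfl fun k hk => hf k hk p hp j

theorem SW_eq_of_multilinearInPoS {N T : Type*} [Fintype N] [DecidableEq N]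
    (θ : N → AgentType N T) (hml : ∀ j, MultilinearInPoS ((θ j).v)) (τ : T) (i : N) :
    SW θ τ = (θ i).p τ * ∑ j, (θ j).v τ (Function.update (PoSProfile θ τ) i 1) +
      (1 - (θ i).p τ) * ∑ j, (θ j).v τ (Function.update (PoSProfile θ τ) i 0) :=
  MultilinearOn.sum Finset.univ (fun j _ => hml j τ) (PoSProfile θ τ) (fun j => (θ j).hp τ) i

/- The PEV payment gives agent `i` the others' welfare conditioned on her own success or failure;
multilinearity in her PoS reassembles the two conditional welfares into the expected one. -/
theorem pev_eu_eq_sw_sub_pivot_general {N T : Type*} [Fintype N] [DecidableEq N]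
    (π : (N → AgentType N T) → T)
    (h : N → (N → AgentType N T) → ℝ)
    (θ : N → AgentType N T) (hml : ∀ i, MultilinearInPoS ((θ i).v))
    (i : N) (r : AgentType N T) :
    EU π h θ i r = SW θ (π (Function.update θ i r)) - h i θ := by
  simp only [EU, SW_eq_of_multilinearInPoS θ hml _ i,
    ← Finset.add_sum_erase _ _ (Finset.mem_univ i)]

/-- if every agent's valuation is multilinear in PoS, then in the PEV
mechanism agent `i`'s expected utility equals the true expected social welfare of the
chosen allocation minus the pivot term. -/
theorem pev_eu_eq_sw_sub_pivot {N T : Type*} [Fintype N] [DecidableEq N]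
    [Fintype T] [Nonempty T]
    (π : (N → AgentType N T) → T) (hπ : Efficient π)
    (h : N → (N → AgentType N T) → ℝ) (hh : PivotIndep h)
    (θ : N → AgentType N T) (hml : ∀ i, MultilinearInPoS ((θ i).v))
    (i : N) (r : AgentType N T) :
    EU π h θ i r = SW θ (π (Function.update θ i r)) - h i θ :=
  pev_eu_eq_sw_sub_pivot_general π h θ hml i r
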